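/- For each qubit i, the weight-2 operator X̄ = Xop {i, τ i} is a logical X operator of the X–I code Ξ(2m): it commutes with every Z-generator and every X-generator of Ξ(2m), and it swaps the codewords, X̄ |0̄⟩ = |1̄⟩ and X̄ |1̄⟩ = |0̄⟩. -/

import Mathlib

open scoped BigOperators

/-- Bit strings on `2m` qubits. -/
abbrev Bits (m : ℕ) := Fin (2*m) → ZMod 2

/-- The `2m`-qubit Hilbert space, as functions from computational basis labels to `ℂ`. -/
abbrev QState (m : ℕ) := Bits m → ℂ

/-- Indicator bit string of a finite set of qubits. -/
def indSet (m : ℕ) (S : Finset (Fin (2*m))) : Bits m := fun i => if i ∈ S then 1 else 0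

/-- The Pauli-X operator on the set `S`: sends `|x⟩` to `|x + 1_S⟩`. -/
def Xop (m : ℕ) (S : Finset (Fin (2*m))) : QState m →ₗ[ℂ] QState m where
  toFun v := fun x => v (x + indSet m S)
  map_add' _ _ := rfl
  map_smul' _ _ := rfl

/-- The Pauli-Z operator on the set `S`: sends `|x⟩` to `(-1)^{∑_{i∈S} x i} |x⟩`. -/
def Zop (m : ℕ) (S : Finset (Fin (2*m))) : QState m →ₗ[ℂ] QState m where
  toFun v := fun x => ((-1 : ℂ) ^ (∑ i ∈ S, (x i).val)) * v x
  map_add' u v := by funext x; simp [mul_add]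
  map_smul' c v := by funext x; simp; ring

/-- The antipodal involution `τ i = i + m (mod 2m)`. -/
def tau (m : ℕ) (i : Fin (2*m)) : Fin (2*m) :=
  ⟨(i.val + m) % (2*m), Nat.mod_lt _ (by have := i.isLt; omega)⟩

/-- The computational basis state `|x⟩`. -/
def ket (m : ℕ) (x : Bits m) : QState m := fun y => if y = x then 1 else 0

/-- The pair-equal bit string determined by `b : Fin m → ZMod 2`. -/
def xb (m : ℕ) (b : Fin m → ZMod 2) : Bits m :=
  fun i => b ⟨i.val % m, Nat.mod_lt _ (by have := i.isLt; omega)⟩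

/-- The logical codeword `|0̄⟩` of the X–I code `Ξ(2m)`. -/
noncomputable def ket0 (m : ℕ) : QState m :=
  ((Real.sqrt (2 ^ (m-1)) : ℂ))⁻¹ •
    ∑ b ∈ Finset.univ.filter (fun b : Fin m → ZMod 2 => ∑ i, b i = 0), ket m (xb m b)

/-- The logical codeword `|1̄⟩` of the X–I code `Ξ(2m)`. -/
noncomputable def ket1 (m : ℕ) : QState m :=
  ((Real.sqrt (2 ^ (m-1)) : ℂ))⁻¹ •
    ∑ b ∈ Finset.univ.filter (fun b : Fin m → ZMod 2 => ∑ i, b i = 1), ket m (xb m b)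

/-!
The pairs `{i, τ i}` are the orbits of the involution `τ`, so two of them meet in either none
or both of their qubits. Since `Xop S` and `Zop T` commute up to the sign `(-1)^{|S ∩ T|}`,
`X̄` commutes with every Z-generator; X-type operators commute outright. On the pair-equal
strings, flipping the pair of `i` sends `x_b` to `x_{b + e}` with `e` the indicator of `i mod m`,
which flips the parity of `b` and hence exchanges the two codewords.
-/

open Finset

section Antipodal

variable {m : ℕ}

lemma tau_val (i : Fin (2*m)) :
    (tau m i).val = if i.val < m then i.val + m else i.val - m := by
  have hi := i.isLt
  simp only [tau]
  split_ifs
  · exact Nat.mod_eq_of_lt (by omega)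
  · rw [show i.val + m = i.val - m + 2*m by omega, Nat.add_mod_right]
    exact Nat.mod_eq_of_lt (by omega)

lemma tau_val_mod (i : Fin (2*m)) : (tau m i).val % m = i.val % m := by
  rw [tau_val]
  split_ifs
  · exact Nat.add_mod_right _ _
  · conv_rhs => rw [show i.val = i.val - m + m by omega, Nat.add_mod_right]

lemma tau_ne (hm : 0 < m) (i : Fin (2*m)) : tau m i ≠ i := by
  intro h
  have := congrArg Fin.val h
  rw [tau_val] at this
  split_ifs at this <;> omega

lemma mem_pair_iff (hm : 0 < m) (i j : Fin (2*m)) :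
    j ∈ ({i, tau m i} : Finset (Fin (2*m))) ↔ j.val % m = i.val % m := by
  simp only [mem_insert, mem_singleton]
  refine ⟨by rintro (rfl | rfl) <;> simp [tau_val_mod], fun h => ?_⟩
  have hi := i.isLt
  have hj := j.isLt
  have hdi : i.val / m < 2 := Nat.div_lt_of_lt_mul (by omega)
  have hdj : j.val / m < 2 := Nat.div_lt_of_lt_mul (by omega)
  have ei := Nat.div_add_mod i.val m
  have ej := Nat.div_add_mod j.val m
  simp only [Fin.ext_iff, tau_val]
  interval_cases i.val / m <;> interval_cases j.val / m <;> split_ifs <;> omega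

lemma tau_mem_pair_iff (hm : 0 < m) (i j : Fin (2*m)) :
    tau m j ∈ ({i, tau m i} : Finset (Fin (2*m))) ↔
      j ∈ ({i, tau m i} : Finset (Fin (2*m))) := by
  rw [mem_pair_iff hm, mem_pair_iff hm, tau_val_mod]

lemma even_card_pair_inter_pair (hm : 0 < m) (i j : Fin (2*m)) :
    Even #(({i, tau m i} : Finset (Fin (2*m))) ∩ {j, tau m j}) := by
  by_cases hj : j ∈ ({i, tau m i} : Finset (Fin (2*m)))
  · have hsub : ({j, tau m j} : Finset (Fin (2*m))) ⊆ {i, tau m i} :=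
      insert_subset hj (singleton_subset_iff.mpr ((tau_mem_pair_iff hm i j).mpr hj))
    rw [inter_eq_right.mpr hsub, card_pair (tau_ne hm j).symm]
    exact even_two
  · have hdisj : Disjoint ({i, tau m i} : Finset (Fin (2*m))) {j, tau m j} := by
      rw [disjoint_insert_right, disjoint_singleton_right, tau_mem_pair_iff hm]
      exact ⟨hj, hj⟩
    rw [disjoint_iff_inter_eq_empty.mp hdisj, card_empty]
    exact Even.zero

end Antipodal

section Pauli

variable {m : ℕ}

lemma neg_one_pow_eq_of_natCast_eq {a b : ℕ} (h : (a : ZMod 2) = b) :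
    (-1 : ℂ) ^ a = (-1) ^ b := by
  rw [neg_one_pow_eq_pow_mod_two, neg_one_pow_eq_pow_mod_two (n := b),
    (ZMod.natCast_eq_natCast_iff' a b 2).mp h]

lemma sum_indSet (S T : Finset (Fin (2*m))) :
    ∑ t ∈ T, indSet m S t = #(S ∩ T) := by
  simp [indSet, inter_comm]

lemma Xop_comp_Zop (S T : Finset (Fin (2*m))) :
    (Xop m S).comp (Zop m T) = (-1 : ℂ) ^ #(S ∩ T) • (Zop m T).comp (Xop m S) := by
  ext v x
  simp only [LinearMap.comp_apply, LinearMap.smul_apply, Xop, Zop, LinearMap.coe_mk,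
    AddHom.coe_mk, Pi.smul_apply, smul_eq_mul, ← mul_assoc, ← pow_add]
  congr 1
  apply neg_one_pow_eq_of_natCast_eq
  push_cast [ZMod.natCast_val, ZMod.cast_id', Pi.add_apply, id]
  rw [sum_add_distrib, sum_indSet, add_comm]

lemma Xop_comp_Xop_comm (S T : Finset (Fin (2*m))) :
    (Xop m S).comp (Xop m T) = (Xop m T).comp (Xop m S) :=
  LinearMap.ext fun v => funext fun _ => congrArg v (add_right_comm _ _ _)

lemma Xop_ket (S : Finset (Fin (2*m))) (x : Bits m) :
    Xop m S (ket m x) = ket m (x + indSet m S) := by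
  ext y
  simp only [Xop, ket, LinearMap.coe_mk, AddHom.coe_mk, ← eq_sub_iff_add_eq,
    ZModModule.sub_eq_add]

end Pauli

section Codewords

variable {m : ℕ}

lemma indSet_pair_eq_xb_single (hm : 0 < m) (i : Fin (2*m)) :
    indSet m {i, tau m i} = xb m (Pi.single ⟨i.val % m, Nat.mod_lt _ hm⟩ 1) := by
  ext j
  simp only [indSet, xb, mem_pair_iff hm, Pi.single_apply, Fin.ext_iff]

lemma sum_filter_add_right {G H M : Type*} [AddCommGroup G] [Fintype G] [DecidableEq H]
    [AddCommGroup H] [AddCommMonoid M] (φ : G →+ H) (c : H) (e : G) (f : G → M) :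
    ∑ b ∈ univ.filter (fun b => φ b = c), f (b + e) =
      ∑ b ∈ univ.filter (fun b => φ b = c + φ e), f b := by
  refine Finset.sum_equiv (Equiv.addRight e) (fun b => ?_) (fun _ _ => rfl)
  simp

lemma Xop_pair_sum_ket_xb (hm : 0 < m) (i : Fin (2*m)) (c : ZMod 2) :
    Xop m {i, tau m i}
        (∑ b ∈ univ.filter (fun b : Fin m → ZMod 2 => ∑ k, b k = c), ket m (xb m b)) =
      ∑ b ∈ univ.filter (fun b : Fin m → ZMod 2 => ∑ k, b k = c + 1), ket m (xb m b) := by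
  set e : Fin m → ZMod 2 := Pi.single ⟨i.val % m, Nat.mod_lt _ hm⟩ 1
  have he : ∑ k, e k = 1 := by simp [e]
  have hsum := sum_filter_add_right (∑ k, Pi.evalAddMonoidHom (fun _ => ZMod 2) k) c e
    (fun b => ket m (xb m b))
  simp only [AddMonoidHom.finsetSum_apply, Pi.evalAddMonoidHom_apply, he] at hsum
  rw [map_sum, ← hsum]
  refine sum_congr rfl fun b _ => ?_
  rw [Xop_ket, indSet_pair_eq_xb_single hm]
  rfl

end Codewords

/-- For each qubit `i`, the weight-2 operator `X̄ = Xop {i, τ i}` is a logical X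
operator of the X–I code `Ξ(2m)`: it commutes with every Z-generator and every
X-generator, and it swaps the codewords `|0̄⟩` and `|1̄⟩`. -/
theorem XI_logical_X (m : ℕ) (hm : 2 ≤ m) (i : Fin (2*m)) :
    (∀ j : Fin (2*m),
        (Xop m {i, tau m i}).comp (Zop m {j, tau m j}) =
          (Zop m {j, tau m j}).comp (Xop m {i, tau m i})) ∧
    (∀ j k : Fin (2*m), ({j, tau m j} : Finset (Fin (2*m))) ≠ {k, tau m k} →
        (Xop m {i, tau m i}).comp (Xop m {j, tau m j, k, tau m k}) =
          (Xop m {j, tau m j, k, tau m k}).comp (Xop m {i, tau m i})) ∧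
    Xop m {i, tau m i} (ket0 m) = ket1 m ∧
    Xop m {i, tau m i} (ket1 m) = ket0 m := by
  have hm0 : 0 < m := by omega
  refine ⟨fun j => ?_, fun j k _ => Xop_comp_Xop_comm _ _, ?_, ?_⟩
  · rw [Xop_comp_Zop, (even_card_pair_inter_pair hm0 i j).neg_one_pow, one_smul]
  · rw [ket0, ket1, map_smul, Xop_pair_sum_ket_xb hm0, zero_add]
  · rw [ket0, ket1, map_smul, Xop_pair_sum_ket_xb hm0, show (1 : ZMod 2) + 1 = 0 from rfl]
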